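/- arXiv:1901.09772 — 2 statements merged into one kernel-verified Lean document; each statement's English description precedes it below -/
import Mathlib

section
/- If B₁,…,B_{d+1} are pairwise mutually unbiased orthonormal bases of ℂ^d, then Σ_{l=1}^{d+1} (1/(d+1)) P(B_l) = (I + d|Φ⟩⟨Φ|)/(d+1); equivalently Σ_l P(B_l) = I + d|Φ⟩⟨Φ|. -/
/-!
Write `P(B) = Σ_i |ψ_i ⊗ ψ̄_i⟩⟨ψ_i ⊗ ψ̄_i|` and `E = d|Φ⟩⟨Φ| = |e⟩⟨e|` with `e = Σ_j |j⟩ ⊗ |j⟩`.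
Completeness of an orthonormal basis gives `Σ_i ψ_i ⊗ ψ̄_i = e`, and
`⟨ψ ⊗ ψ̄, φ ⊗ φ̄⟩ = |⟨ψ, φ⟩|²`. Hence each `P_l = P(B_l)` is a projection, unbiasedness gives
`P_l P_m = E / d` for `l ≠ m`, and `P_l E = E P_l = E`, `E² = d E`. With `S = Σ_l P_l` this makes
`S - E` a Hermitian idempotent of trace `(d + 1) d - d = d²`, i.e. a projection of full rank,
so `S - E = 1`.
-/

open Matrix
open scoped ComplexOrder

/-- The conjugate-basis test projector P(B) = Σ_{ψ∈B} |ψ⟩⟨ψ| ⊗ |ψ*⟩⟨ψ*| on ℂ^d ⊗ ℂ^d. -/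
noncomputable def projCB (d : ℕ) (B : Fin d → Fin d → ℂ) :
    Matrix (Fin d × Fin d) (Fin d × Fin d) ℂ :=
  ∑ i, Matrix.kroneckerMap (· * ·) (Matrix.vecMulVec (B i) (star (B i)))
      (Matrix.vecMulVec (star (B i)) (B i))

/-- The maximally entangled state |Φ⟩ = d^{-1/2} Σ_j |j⟩⊗|j⟩ as a vector on Fin d × Fin d. -/
noncomputable def PhiVec (d : ℕ) : Fin d × Fin d → ℂ :=
  fun p => if p.1 = p.2 then ((Real.sqrt d : ℝ) : ℂ)⁻¹ else 0

/-- The rank-one projector |Φ⟩⟨Φ|. -/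
noncomputable def PhiMat (d : ℕ) : Matrix (Fin d × Fin d) (Fin d × Fin d) ℂ :=
  Matrix.vecMulVec (PhiVec d) (star (PhiVec d))

/-- B is an orthonormal basis of ℂ^d. -/
def IsONB (d : ℕ) (B : Fin d → Fin d → ℂ) : Prop :=
  ∀ i j, star (B i) ⬝ᵥ B j = if i = j then 1 else 0

namespace Matrix

variable {ι κ n R : Type*} [Fintype ι] [Fintype κ]

section CommSemiring

variable [CommSemiring R]

theorem sum_sum_vecMulVec {m : Type*} (u : ι → m → R) (x : κ → n → R) :
    ∑ i, ∑ j, vecMulVec (u i) (x j) = vecMulVec (∑ i, u i) (∑ j, x j) := by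
  ext a b
  simp only [sum_apply, vecMulVec_apply, Finset.sum_apply, Finset.sum_mul_sum]

variable [StarRing R]

def frameOperator (v : ι → n → R) : Matrix n n R :=
  ∑ i, vecMulVec (v i) (star (v i))

theorem frameOperator_unique [Unique ι] (v : ι → n → R) :
    frameOperator v = vecMulVec (v default) (star (v default)) :=
  Fintype.sum_unique _

theorem isHermitian_frameOperator (v : ι → n → R) : (frameOperator v).IsHermitian := by
  simp only [IsHermitian, frameOperator, conjTranspose_sum, conjTranspose_vecMulVec, star_star]

variable [Fintype n]

theorem frameOperator_mul_frameOperator (v : ι → n → R) (w : κ → n → R) :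
    frameOperator v * frameOperator w =
      ∑ i, ∑ j, (star (v i) ⬝ᵥ w j) • vecMulVec (v i) (star (w j)) := by
  simp only [frameOperator, Finset.sum_mul_sum, vecMulVec_mul_vecMulVec, vecMulVec_smul]

theorem frameOperator_mul_self_of_orthonormal [DecidableEq ι] {v : ι → n → R}
    (hv : ∀ i j, star (v i) ⬝ᵥ v j = if i = j then 1 else 0) :
    frameOperator v * frameOperator v = frameOperator v := by
  rw [frameOperator_mul_frameOperator]
  simp [hv, ite_smul, frameOperator]

theorem frameOperator_mul_frameOperator_of_dotProduct_eq {v : ι → n → R} {w : κ → n → R}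
    {c : R} (hvw : ∀ i j, star (v i) ⬝ᵥ w j = c) :
    frameOperator v * frameOperator w = c • vecMulVec (∑ i, v i) (star (∑ j, w j)) := by
  simp only [frameOperator_mul_frameOperator, hvw, ← Finset.smul_sum, star_sum,
    sum_sum_vecMulVec]

theorem trace_frameOperator (v : ι → n → R) :
    (frameOperator v).trace = ∑ i, star (v i) ⬝ᵥ v i := by
  simp only [frameOperator, trace_sum, trace_vecMulVec, dotProduct_comm]

end CommSemiring

theorem eq_one_of_isHermitian_of_isIdempotentElem {𝕜 : Type*} [RCLike 𝕜] [Fintype n]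
    [DecidableEq n] {A : Matrix n n 𝕜} (hA : A.IsHermitian) (hAA : IsIdempotentElem A)
    (htr : A.trace = Fintype.card n) : A = 1 := by
  have hQ : (1 - A)ᴴ * (1 - A) = 1 - A := by
    rw [conjTranspose_sub, conjTranspose_one, hA.eq]
    exact hAA.one_sub.eq
  have htr0 : ((1 - A)ᴴ * (1 - A)).trace = 0 := by
    rw [hQ, trace_sub, trace_one, htr, sub_self]
  have h1A : 1 - A = 0 := (trace_conjTranspose_mul_self_eq_zero_iff (R := 𝕜)).mp htr0
  exact (sub_eq_zero.mp h1A).symm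

end Matrix

theorem isIdempotentElem_sum_sub {K A : Type*} [Field K] [Ring A] [Algebra K A] {d : ℕ}
    (hd : (d : K) ≠ 0) {P : Fin (d + 1) → A} {E : A} (hPP : ∀ l, P l * P l = P l)
    (hPQ : ∀ l m, l ≠ m → P l * P m = (d : K)⁻¹ • E) (hPE : ∀ l, P l * E = E)
    (hEP : ∀ l, E * P l = E) (hEE : E * E = d • E) :
    IsIdempotentElem (∑ l, P l - E) := by
  have hrow : ∀ l, ∑ m, P l * P m = P l + E := by
    intro l
    rw [← Finset.add_sum_erase _ _ (Finset.mem_univ l), hPP,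
      Finset.sum_congr rfl fun m hm => hPQ l m (Finset.ne_of_mem_erase hm).symm,
      Finset.sum_const, Finset.card_erase_of_mem (Finset.mem_univ l), Finset.card_univ,
      Fintype.card_fin, Nat.add_sub_cancel, ← Nat.cast_smul_eq_nsmul K, smul_smul,
      mul_inv_cancel₀ hd, one_smul]
  have hSS : (∑ l, P l) * ∑ l, P l = ∑ l, P l + (d + 1) • E := by
    simp only [Finset.sum_mul_sum, hrow, Finset.sum_add_distrib, Finset.sum_const,
      Finset.card_univ, Fintype.card_fin]
  have hSE : (∑ l, P l) * E = (d + 1) • E := by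
    simp only [Finset.sum_mul, hPE, Finset.sum_const, Finset.card_univ, Fintype.card_fin]
  have hES : E * ∑ l, P l = (d + 1) • E := by
    simp only [Finset.mul_sum, hEP, Finset.sum_const, Finset.card_univ, Fintype.card_fin]
  rw [IsIdempotentElem, sub_mul, mul_sub, mul_sub, hSS, hSE, hES, hEE, add_nsmul, one_nsmul]
  abel

section TensorConj

variable {n R : Type*} [CommSemiring R] [StarRing R]

def tensorConj (ψ : n → R) : n × n → R := fun p => ψ p.1 * star (ψ p.2)

def vecId [DecidableEq n] : n × n → R := fun p => if p.1 = p.2 then 1 else 0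

theorem kroneckerMap_vecMulVec_star (ψ : n → R) :
    kroneckerMap (· * ·) (vecMulVec ψ (star ψ)) (vecMulVec (star ψ) ψ) =
      vecMulVec (tensorConj ψ) (star (tensorConj ψ)) := by
  ext ⟨a, b⟩ ⟨c, d⟩
  simp only [kroneckerMap_apply, vecMulVec_apply, tensorConj, Pi.star_apply, star_mul',
    star_star]
  ring

variable [Fintype n]

theorem star_tensorConj_dotProduct_tensorConj (ψ φ : n → R) :
    star (tensorConj ψ) ⬝ᵥ tensorConj φ = (star ψ ⬝ᵥ φ) * star (star ψ ⬝ᵥ φ) := by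
  simp only [dotProduct, Pi.star_apply, tensorConj, Fintype.sum_prod_type, star_mul',
    star_star, star_sum, Finset.sum_mul_sum]
  exact Finset.sum_congr rfl fun a _ => Finset.sum_congr rfl fun b _ => by ring

variable [DecidableEq n]

theorem star_tensorConj_dotProduct_vecId (ψ : n → R) :
    star (tensorConj ψ) ⬝ᵥ vecId = star ψ ⬝ᵥ ψ := by
  simp [dotProduct, vecId, tensorConj, Fintype.sum_prod_type, star_mul']

theorem star_vecId_dotProduct_tensorConj (ψ : n → R) :
    star vecId ⬝ᵥ tensorConj ψ = star ψ ⬝ᵥ ψ := by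
  simp [dotProduct, vecId, tensorConj, Fintype.sum_prod_type, apply_ite, mul_comm]

theorem star_vecId_dotProduct_vecId : star vecId ⬝ᵥ (vecId : n × n → R) = Fintype.card n := by
  simp [dotProduct, vecId, Fintype.sum_prod_type, apply_ite]

end TensorConj

section MutuallyUnbiased

variable {d : ℕ} {B C : Fin d → Fin d → ℂ}

theorem projCB_eq_frameOperator (B : Fin d → Fin d → ℂ) :
    projCB d B = frameOperator fun i => tensorConj (B i) :=
  Finset.sum_congr rfl fun i _ => kroneckerMap_vecMulVec_star (B i)

theorem isHermitian_projCB (B : Fin d → Fin d → ℂ) : (projCB d B).IsHermitian :=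
  projCB_eq_frameOperator B ▸ isHermitian_frameOperator _

def vecIdProj (d : ℕ) : Matrix (Fin d × Fin d) (Fin d × Fin d) ℂ :=
  frameOperator fun _ : Unit => vecId

theorem natCast_smul_PhiMat (hd : 0 < d) : (d : ℂ) • PhiMat d = vecIdProj d := by
  have hsqrt : ((Real.sqrt d : ℝ) : ℂ)⁻¹ * ((Real.sqrt d : ℝ) : ℂ)⁻¹ = (d : ℂ)⁻¹ := by
    rw [← mul_inv, ← Complex.ofReal_mul, Real.mul_self_sqrt (Nat.cast_nonneg d)]
    simp
  have hd' : (d : ℂ) ≠ 0 := by exact_mod_cast hd.ne'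
  ext ⟨a, b⟩ ⟨c, e⟩
  simp only [vecIdProj, frameOperator_unique, PhiMat, Matrix.smul_apply, vecMulVec_apply,
    PhiVec, vecId, Pi.star_apply, smul_eq_mul]
  split_ifs <;> simp [Complex.conj_ofReal, hsqrt, hd', star_inv₀]

theorem IsONB.sum_tensorConj (hB : IsONB d B) : ∑ i, tensorConj (B i) = vecId := by
  set M : Matrix (Fin d) (Fin d) ℂ := (of B)ᵀ
  have hMM : Mᴴ * M = 1 := by
    ext i j
    simpa [M, mul_apply, one_apply, dotProduct] using hB i j
  have hMM' := mul_eq_one_comm.mp hMM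
  funext ⟨a, b⟩
  simpa [M, mul_apply, one_apply, tensorConj, vecId, Finset.sum_apply] using
    congrFun (congrFun hMM' a) b

theorem IsONB.projCB_mul_self (hB : IsONB d B) : projCB d B * projCB d B = projCB d B := by
  rw [projCB_eq_frameOperator]
  refine frameOperator_mul_self_of_orthonormal fun i j => ?_
  rw [star_tensorConj_dotProduct_tensorConj, hB i j]
  split_ifs <;> simp

theorem projCB_mul_projCB_of_unbiased (hB : IsONB d B) (hC : IsONB d C)
    (hBC : ∀ i j, ‖star (B i) ⬝ᵥ C j‖ ^ 2 = 1 / (d : ℝ)) :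
    projCB d B * projCB d C = (d : ℂ)⁻¹ • vecIdProj d := by
  have hdot : ∀ i j, star (tensorConj (B i)) ⬝ᵥ tensorConj (C j) = (d : ℂ)⁻¹ := by
    intro i j
    rw [star_tensorConj_dotProduct_tensorConj, RCLike.star_def, Complex.mul_conj',
      ← Complex.ofReal_pow, hBC, one_div, Complex.ofReal_inv, Complex.ofReal_natCast]
  rw [projCB_eq_frameOperator, projCB_eq_frameOperator,
    frameOperator_mul_frameOperator_of_dotProduct_eq hdot, hB.sum_tensorConj,
    hC.sum_tensorConj, vecIdProj, frameOperator_unique]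

theorem IsONB.projCB_mul_vecIdProj (hB : IsONB d B) :
    projCB d B * vecIdProj d = vecIdProj d := by
  have hdot : ∀ i (_ : Unit), star (tensorConj (B i)) ⬝ᵥ vecId = 1 := by
    intro i _
    rw [star_tensorConj_dotProduct_vecId, hB i i, if_pos rfl]
  rw [projCB_eq_frameOperator, vecIdProj, frameOperator_mul_frameOperator_of_dotProduct_eq hdot,
    one_smul, hB.sum_tensorConj, Fintype.sum_unique, frameOperator_unique]

theorem IsONB.vecIdProj_mul_projCB (hB : IsONB d B) :
    vecIdProj d * projCB d B = vecIdProj d := by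
  have hdot : ∀ (_ : Unit) i, star vecId ⬝ᵥ tensorConj (B i) = 1 := by
    intro _ i
    rw [star_vecId_dotProduct_tensorConj, hB i i, if_pos rfl]
  rw [projCB_eq_frameOperator, vecIdProj, frameOperator_mul_frameOperator_of_dotProduct_eq hdot,
    one_smul, hB.sum_tensorConj, Fintype.sum_unique, frameOperator_unique]

theorem vecIdProj_mul_self : vecIdProj d * vecIdProj d = d • vecIdProj d := by
  have hdot : ∀ (_ _ : Unit), star vecId ⬝ᵥ (vecId : Fin d × Fin d → ℂ) = d := by
    intro _ _
    rw [star_vecId_dotProduct_vecId, Fintype.card_fin]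
  rw [vecIdProj, frameOperator_mul_frameOperator_of_dotProduct_eq hdot, Fintype.sum_unique,
    frameOperator_unique, Nat.cast_smul_eq_nsmul]

theorem IsONB.trace_projCB (hB : IsONB d B) : (projCB d B).trace = d := by
  rw [projCB_eq_frameOperator, trace_frameOperator]
  simp [star_tensorConj_dotProduct_tensorConj, hB _ _]

theorem trace_vecIdProj : (vecIdProj d).trace = d := by
  simp [vecIdProj, trace_frameOperator, star_vecId_dotProduct_vecId]

end MutuallyUnbiased

/-- a complete set of d+1 mutually unbiased bases gives
Σ_l P(B_l) = I + d|Φ⟩⟨Φ|, i.e. Σ_l (1/(d+1)) P(B_l) = (I + d|Φ⟩⟨Φ|)/(d+1). -/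
theorem stmt7 {d : ℕ} (hd : 0 < d)
    (B : Fin (d + 1) → Fin d → Fin d → ℂ) (hB : ∀ l, IsONB d (B l))
    (hMUB : ∀ l m, l ≠ m → ∀ i j, ‖star (B l i) ⬝ᵥ B m j‖ ^ 2 = 1 / (d : ℝ)) :
    (∑ l, ((d : ℂ) + 1)⁻¹ • projCB d (B l) = ((d : ℂ) + 1)⁻¹ • (1 + (d : ℂ) • PhiMat d)) ∧
    ∑ l, projCB d (B l) = 1 + (d : ℂ) • PhiMat d := by
  have hd' : (d : ℂ) ≠ 0 := by exact_mod_cast hd.ne'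
  have hidem : IsIdempotentElem (∑ l, projCB d (B l) - vecIdProj d) :=
    isIdempotentElem_sum_sub hd' (fun l => (hB l).projCB_mul_self)
      (fun l m hlm => projCB_mul_projCB_of_unbiased (hB l) (hB m) (hMUB l m hlm))
      (fun l => (hB l).projCB_mul_vecIdProj) (fun l => (hB l).vecIdProj_mul_projCB)
      vecIdProj_mul_self
  have hherm : (∑ l, projCB d (B l) - vecIdProj d).IsHermitian :=
    .sub (isSelfAdjoint_sum _ fun l _ => isHermitian_projCB (B l)) (isHermitian_frameOperator _)
  have htrace : (∑ l, projCB d (B l) - vecIdProj d).trace = Fintype.card (Fin d × Fin d) := by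
    simp only [trace_sub, trace_sum, (hB _).trace_projCB, trace_vecIdProj, Finset.sum_const,
      Finset.card_univ, Fintype.card_fin, Fintype.card_prod, nsmul_eq_mul]
    push_cast
    ring
  have hsum : ∑ l, projCB d (B l) = 1 + (d : ℂ) • PhiMat d := by
    rw [natCast_smul_PhiMat hd, ← eq_one_of_isHermitian_of_isIdempotentElem hherm hidem htrace,
      sub_add_cancel]
  exact ⟨by rw [← Finset.smul_sum, hsum], hsum⟩
end

section
/- Let B = {ψ_j}_{j=1}^d and B' = {φ_k}_{k=1}^d be orthonormal bases of ℂ^d, and let P = Σ_j Σ_{k∈A_j} |ψ_j⟩⟨ψ_j|⊗|φ_k⟩⟨φ_k| for subsets A_j ⊆ {1,…,d}. If P ≥ |Φ⟩⟨Φ| (equivalently ⟨Φ|P|Φ⟩ = 1), then P ≥ P(B) = Σ_j |ψ_j⟩⟨ψ_j|⊗|ψ_j*⟩⟨ψ_j*|. -/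
/-!
Write `ψ_j · φ_k = Σ_i ψ_j(i) φ_k(i)`, so that `|ψ_j · φ_k| = |⟨φ_k, ψ_j*⟩|`. Then
`⟨Φ|P|Φ⟩ = d⁻¹ Σ_j Σ_{k ∈ A_j} |ψ_j · φ_k|²`, while Parseval in the basis `B'` gives
`Σ_k |ψ_j · φ_k|² = ‖ψ_j*‖² = 1` for every `j`. So `⟨Φ|P|Φ⟩ ≥ 1` forces `ψ_j · φ_k = 0` for
`k ∉ A_j`: the projection `Q_j = Σ_{k ∈ A_j} |φ_k⟩⟨φ_k|` fixes `ψ_j*`, hence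
`Q_j - |ψ_j*⟩⟨ψ_j*|` is again a projection, and
`P - P(B) = Σ_j |ψ_j⟩⟨ψ_j| ⊗ (Q_j - |ψ_j*⟩⟨ψ_j*|)` is a sum of Kronecker products of positive
semidefinite matrices.
-/

open Matrix
open scoped ComplexOrder

open scoped Kronecker

namespace Matrix

variable {n m R : Type*}

theorem kronecker_vecMulVec [CommSemigroup R] (a b : n → R) (c e : m → R) :
    vecMulVec a b ⊗ₖ vecMulVec c e =
      vecMulVec (fun p : n × m => a p.1 * c p.2) (fun p => b p.1 * e p.2) := by
  ext p q
  simp only [kroneckerMap_apply, vecMulVec_apply]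
  ac_rfl

theorem kronecker_sub [NonUnitalNonAssocRing R] (A : Matrix n n R) (B₁ B₂ : Matrix m m R) :
    A ⊗ₖ (B₁ - B₂) = A ⊗ₖ B₁ - A ⊗ₖ B₂ := by
  ext
  simp [mul_sub]

theorem kronecker_finsetSum [NonUnitalNonAssocSemiring R] {ι : Type*} (s : Finset ι)
    (A : Matrix n n R) (B : ι → Matrix m m R) : A ⊗ₖ (∑ k ∈ s, B k) = ∑ k ∈ s, A ⊗ₖ B k := by
  ext
  simp [Matrix.sum_apply, Finset.mul_sum]

variable [Fintype n]

section CommStarRing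

variable [CommRing R] [StarRing R]

theorem star_dotProduct_vecMulVec_star_mulVec (u x : n → R) :
    star x ⬝ᵥ (vecMulVec u (star u) *ᵥ x) = (star x ⬝ᵥ u) * star (star x ⬝ᵥ u) := by
  rw [vecMulVec_mulVec, op_smul_eq_smul, dotProduct_smul, smul_eq_mul, star_dotProduct, mul_comm]

theorem isStarProjection_vecMulVec_star {u : n → R} (hu : star u ⬝ᵥ u = 1) :
    IsStarProjection (vecMulVec u (star u)) where
  isIdempotentElem := by
    rw [IsIdempotentElem, vecMulVec_mul_vecMulVec, hu, one_smul]
  isSelfAdjoint := by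
    rw [IsSelfAdjoint, star_eq_conjTranspose, conjTranspose_vecMulVec, star_star]

end CommStarRing

end Matrix

open scoped MatrixOrder in
theorem IsStarProjection.posSemidef {n 𝕜 : Type*} [Fintype n] [RCLike 𝕜] {P : Matrix n n 𝕜}
    (hP : IsStarProjection P) : P.PosSemidef :=
  hP.nonneg.posSemidef

namespace IsONB

variable {d : ℕ} {B : Fin d → Fin d → ℂ}

theorem sum_vecMulVec_eq_one (hB : IsONB d B) : ∑ k, vecMulVec (B k) (star (B k)) = 1 := by
  let U : Matrix (Fin d) (Fin d) ℂ := Matrix.of fun i k => B k i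
  have hU : Uᴴ * U = 1 := by
    ext k l
    simpa [U, mul_apply, dotProduct, one_apply] using hB k l
  ext i i'
  simpa [U, mul_apply, Matrix.sum_apply, vecMulVec_apply, one_apply] using
    congr_fun₂ (mul_eq_one_comm.mp hU : U * Uᴴ = 1) i i'

theorem isStarProjection_sum_vecMulVec (hB : IsONB d B) (s : Finset (Fin d)) :
    IsStarProjection (∑ k ∈ s, vecMulVec (B k) (star (B k))) := by
  classical
  induction s using Finset.induction_on with
  | empty => simp
  | insert k s hk ih =>
    rw [Finset.sum_insert hk]
    refine (isStarProjection_vecMulVec_star (by simpa using hB k k)).add ih ?_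
    rw [Finset.mul_sum]
    refine Finset.sum_eq_zero fun l hl => ?_
    rw [vecMulVec_mul_vecMulVec, hB k l, if_neg (ne_of_mem_of_not_mem hl hk).symm, zero_smul,
      vecMulVec_zero]

theorem star_dotProduct_self_eq_sum (hB : IsONB d B) (x : Fin d → ℂ) :
    star x ⬝ᵥ x = ∑ k, (star x ⬝ᵥ B k) * star (star x ⬝ᵥ B k) := by
  calc star x ⬝ᵥ x = star x ⬝ᵥ ((∑ k, vecMulVec (B k) (star (B k))) *ᵥ x) := by
        rw [hB.sum_vecMulVec_eq_one, one_mulVec]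
    _ = _ := by simp only [sum_mulVec, dotProduct_sum, star_dotProduct_vecMulVec_star_mulVec]

theorem sum_vecMulVec_mulVec_eq_self (hB : IsONB d B) {s : Finset (Fin d)} {x : Fin d → ℂ}
    (hx : ∀ k ∉ s, star x ⬝ᵥ B k = 0) : (∑ k ∈ s, vecMulVec (B k) (star (B k))) *ᵥ x = x := by
  have hzero : ∀ k ∉ s, vecMulVec (B k) (star (B k)) *ᵥ x = 0 := fun k hk => by
    rw [vecMulVec_mulVec, star_dotProduct, hx k hk, star_zero, MulOpposite.op_zero, zero_smul]
  rw [sum_mulVec, Finset.sum_subset (Finset.subset_univ s) fun k _ hk => hzero k hk, ← sum_mulVec,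
    hB.sum_vecMulVec_eq_one, one_mulVec]

end IsONB

theorem Finset.eq_zero_of_sum_sum_le_sum_sum {ι κ M : Type*} [Fintype ι] [Fintype κ]
    [AddCommMonoid M] [PartialOrder M] [IsOrderedCancelAddMonoid M] {f : ι → κ → M}
    (hf : ∀ j k, 0 ≤ f j k) {A : ι → Finset κ}
    (h : ∑ j, ∑ k, f j k ≤ ∑ j, ∑ k ∈ A j, f j k) {j : ι} {k : κ} (hk : k ∉ A j) :
    f j k = 0 := by
  classical
  have hsplit : ∑ j, ∑ k, f j k = ∑ j, ∑ k ∈ (A j)ᶜ, f j k + ∑ j, ∑ k ∈ A j, f j k := by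
    simp only [← Finset.sum_add_distrib, Finset.sum_compl_add_sum]
  have hnonneg : ∀ j ∈ Finset.univ, 0 ≤ ∑ k ∈ (A j)ᶜ, f j k :=
    fun j _ => Finset.sum_nonneg fun k _ => hf j k
  have hcompl : ∑ j, ∑ k ∈ (A j)ᶜ, f j k = 0 :=
    le_antisymm (by simpa [hsplit] using h) (Finset.sum_nonneg hnonneg)
  exact (Finset.sum_eq_zero_iff_of_nonneg fun k _ => hf j k).mp
    ((Finset.sum_eq_zero_iff_of_nonneg hnonneg).mp hcompl j (Finset.mem_univ j)) k (by simpa)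

section MaximallyEntangled

variable {d : ℕ}

theorem star_PhiVec : star (PhiVec d) = PhiVec d := by
  ext p
  by_cases hp : p.1 = p.2 <;> simp [PhiVec, hp, Complex.conj_ofReal]

theorem star_PhiVec_dotProduct_kronecker (a b : Fin d → ℂ) :
    star (PhiVec d) ⬝ᵥ (fun p => a p.1 * b p.2) = ((Real.sqrt d : ℝ) : ℂ)⁻¹ * (a ⬝ᵥ b) := by
  rw [star_PhiVec]
  simp [PhiVec, dotProduct, Fintype.sum_prod_type, ite_mul, Finset.mul_sum]

theorem inv_sqrt_mul_star_inv_sqrt :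
    ((Real.sqrt d : ℝ) : ℂ)⁻¹ * star ((Real.sqrt d : ℝ) : ℂ)⁻¹ = (d : ℂ)⁻¹ := by
  rw [star_inv₀, Complex.star_def, Complex.conj_ofReal, ← mul_inv, ← Complex.ofReal_mul,
    Real.mul_self_sqrt (Nat.cast_nonneg d), Complex.ofReal_natCast]

theorem star_PhiVec_dotProduct_self (hd : 0 < d) : star (PhiVec d) ⬝ᵥ PhiVec d = 1 := by
  have hsum : star (PhiVec d) ⬝ᵥ PhiVec d =
      ∑ _i : Fin d, ((Real.sqrt d : ℝ) : ℂ)⁻¹ * star ((Real.sqrt d : ℝ) : ℂ)⁻¹ := by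
    simp [dotProduct, PhiVec, Fintype.sum_prod_type, ite_mul, mul_comm]
  rw [hsum, inv_sqrt_mul_star_inv_sqrt, Finset.sum_const, Finset.card_univ, Fintype.card_fin,
    nsmul_eq_mul, mul_inv_cancel₀ (by exact_mod_cast hd.ne')]

theorem star_PhiVec_dotProduct_PhiMat_mulVec (hd : 0 < d) :
    star (PhiVec d) ⬝ᵥ (PhiMat d *ᵥ PhiVec d) = 1 := by
  rw [PhiMat, star_dotProduct_vecMulVec_star_mulVec, star_PhiVec_dotProduct_self hd, star_one,
    one_mul]

theorem star_PhiVec_dotProduct_kronecker_mulVec (a b : Fin d → ℂ) :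
    star (PhiVec d) ⬝ᵥ ((vecMulVec a (star a) ⊗ₖ vecMulVec b (star b)) *ᵥ PhiVec d) =
      (d : ℂ)⁻¹ * ((a ⬝ᵥ b) * star (a ⬝ᵥ b)) := by
  have hstar : (fun p : Fin d × Fin d => star a p.1 * star b p.2) =
      star fun p => a p.1 * b p.2 := by
    ext; simp
  rw [kronecker_vecMulVec, hstar, star_dotProduct_vecMulVec_star_mulVec,
    star_PhiVec_dotProduct_kronecker, star_mul', ← inv_sqrt_mul_star_inv_sqrt]
  ring

theorem star_PhiVec_dotProduct_sum_kronecker_mulVec (B B' : Fin d → Fin d → ℂ)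
    (A : Fin d → Finset (Fin d)) :
    star (PhiVec d) ⬝ᵥ ((∑ j, ∑ k ∈ A j,
        vecMulVec (B j) (star (B j)) ⊗ₖ vecMulVec (B' k) (star (B' k))) *ᵥ PhiVec d) =
      (d : ℂ)⁻¹ * ∑ j, ∑ k ∈ A j, (B j ⬝ᵥ B' k) * star (B j ⬝ᵥ B' k) := by
  simp only [sum_mulVec, dotProduct_sum, star_PhiVec_dotProduct_kronecker_mulVec, Finset.mul_sum]

end MaximallyEntangled

section ProductBasisProjector

variable {d : ℕ} {B B' : Fin d → Fin d → ℂ}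

theorem IsONB.sum_dotProduct_mul_star (hB : IsONB d B) (hB' : IsONB d B') (j : Fin d) :
    ∑ k, (B j ⬝ᵥ B' k) * star (B j ⬝ᵥ B' k) = 1 := by
  have hnorm : B j ⬝ᵥ star (B j) = 1 := by
    rw [dotProduct_comm]
    simpa using hB j j
  simpa only [star_star, hnorm] using (hB'.star_dotProduct_self_eq_sum (star (B j))).symm

theorem dotProduct_eq_zero_of_posSemidef_sub_PhiMat (hd : 0 < d) (hB : IsONB d B)
    (hB' : IsONB d B') {A : Fin d → Finset (Fin d)}
    (hge : ((∑ j, ∑ k ∈ A j,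
        vecMulVec (B j) (star (B j)) ⊗ₖ vecMulVec (B' k) (star (B' k))) - PhiMat d).PosSemidef)
    {j k : Fin d} (hk : k ∉ A j) : B j ⬝ᵥ B' k = 0 := by
  set S := ∑ j, ∑ k ∈ A j, (B j ⬝ᵥ B' k) * star (B j ⬝ᵥ B' k)
  have hd' : (0 : ℂ) < d := by exact_mod_cast hd
  have hexp : 1 ≤ (d : ℂ)⁻¹ * S := by
    have := hge.dotProduct_mulVec_nonneg (PhiVec d)
    rwa [sub_mulVec, dotProduct_sub, star_PhiVec_dotProduct_sum_kronecker_mulVec,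
      star_PhiVec_dotProduct_PhiMat_mulVec hd, sub_nonneg] at this
  have htotal : ∑ j, ∑ k, (B j ⬝ᵥ B' k) * star (B j ⬝ᵥ B' k) ≤ S := by
    calc _ = (d : ℂ) := by
          simp only [hB.sum_dotProduct_mul_star hB', Finset.sum_const, Finset.card_univ,
            Fintype.card_fin, nsmul_eq_mul, mul_one]
      _ ≤ S := by simpa using (le_inv_mul_iff₀ hd').mp hexp
  exact (CStarRing.mul_star_self_eq_zero_iff _).mp (Finset.eq_zero_of_sum_sum_le_sum_sum
    (fun j k => mul_star_self_nonneg _) htotal hk)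

theorem IsONB.posSemidef_kronecker_sub_vecMulVec (hB' : IsONB d B') {ψ : Fin d → ℂ}
    (hψ : star ψ ⬝ᵥ ψ = 1) {s : Finset (Fin d)} (hs : ∀ k ∉ s, ψ ⬝ᵥ B' k = 0) :
    (vecMulVec ψ (star ψ) ⊗ₖ
      ((∑ k ∈ s, vecMulVec (B' k) (star (B' k))) - vecMulVec (star ψ) ψ)).PosSemidef := by
  have hR : IsStarProjection (vecMulVec (star ψ) ψ) := by
    simpa using isStarProjection_vecMulVec_star (u := star ψ) (by rwa [star_star, dotProduct_comm])
  have hQR : (∑ k ∈ s, vecMulVec (B' k) (star (B' k))) * vecMulVec (star ψ) ψ =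
      vecMulVec (star ψ) ψ := by
    rw [mul_vecMulVec, hB'.sum_vecMulVec_mulVec_eq_self (by simpa using hs)]
  exact (posSemidef_vecMulVec_self_star ψ).kronecker
    (hR.sub_of_mul_eq_right (hB'.isStarProjection_sum_vecMulVec s) hQR).posSemidef

end ProductBasisProjector

/-- if P = Σ_j Σ_{k∈A_j} |ψ_j⟩⟨ψ_j|⊗|φ_k⟩⟨φ_k| is diagonal in a product basis
and P ≥ |Φ⟩⟨Φ|, then P ≥ P(B). -/
theorem stmt11 {d : ℕ} (hd : 0 < d)
    (B B' : Fin d → Fin d → ℂ) (hB : IsONB d B) (hB' : IsONB d B')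
    (A : Fin d → Finset (Fin d))
    (P : Matrix (Fin d × Fin d) (Fin d × Fin d) ℂ)
    (hP : P = ∑ j, ∑ k ∈ A j,
        Matrix.kroneckerMap (· * ·) (Matrix.vecMulVec (B j) (star (B j)))
          (Matrix.vecMulVec (B' k) (star (B' k))))
    (hge : (P - PhiMat d).PosSemidef) :
    (P - projCB d B).PosSemidef := by
  subst hP
  have hdecomp : (∑ j, ∑ k ∈ A j,
        vecMulVec (B j) (star (B j)) ⊗ₖ vecMulVec (B' k) (star (B' k))) - projCB d B =
      ∑ j, vecMulVec (B j) (star (B j)) ⊗ₖ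
        ((∑ k ∈ A j, vecMulVec (B' k) (star (B' k))) - vecMulVec (star (B j)) (B j)) := by
    simp only [projCB, ← Finset.sum_sub_distrib, kronecker_sub, kronecker_finsetSum]
  rw [hdecomp]
  exact posSemidef_sum _ fun j _ => hB'.posSemidef_kronecker_sub_vecMulVec (by simpa using hB j j)
    fun k hk => dotProduct_eq_zero_of_posSemidef_sub_PhiMat hd hB hB' hge hk
end
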